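/- arXiv:2205.03953 — 3 statements merged into one kernel-verified Lean document; each statement's English description precedes it below -/
import Mathlib

section
/- Let A ⊆ ℤ and let χ_A be its characteristic function. Then ‖(Mχ_A)''‖₁ ≤ 3‖χ_A''‖₁, i.e. Σ_{n∈ℤ} |Mχ_A(n+2) − 2Mχ_A(n+1) + Mχ_A(n)| ≤ 3 Σ_{n∈ℤ} |χ_A(n+2) − 2χ_A(n+1) + χ_A(n)|, where both sums are interpreted in the extended nonnegative reals. -/
open Classical

/-- Discrete noncentered average `A_{r,s}f(n) = (1/(r+s+1)) ∑_{j=-r}^{s} |f(n+j)|`. -/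
noncomputable def avg (f : ℤ → ℝ) (r s : ℕ) (n : ℤ) : ℝ :=
  (1 / (r + s + 1 : ℝ)) * ∑ j ∈ Finset.Icc (-(r : ℤ)) (s : ℤ), |f (n + j)|

/-- Discrete noncentered Hardy–Littlewood maximal function `Mf(n) = sup_{r,s∈ℕ} A_{r,s}f(n)`. -/
noncomputable def M (f : ℤ → ℝ) (n : ℤ) : ℝ :=
  ⨆ r : ℕ, ⨆ s : ℕ, avg f r s n

/-- Characteristic function of `A ⊆ ℤ`. -/
noncomputable def chi (A : Set ℤ) (n : ℤ) : ℝ := if n ∈ A then 1 else 0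

/-- The set of convex points `S₊f`. -/
def Splus (f : ℤ → ℝ) : Set ℤ := {n : ℤ | 2 * f n ≤ f (n + 1) + f (n - 1)}

/-- The set of concave points `S₋f`. -/
def Sminus (f : ℤ → ℝ) : Set ℤ := (Splus f)ᶜ

/-- The left boundary `∂ₗS₋f`. -/
def bdl (f : ℤ → ℝ) : Set ℤ := {n : ℤ | n ∈ Sminus f ∧ n - 1 ∈ Splus f}

/-- The right boundary `∂ᵣS₋f`. -/
def bdr (f : ℤ → ℝ) : Set ℤ := {n : ℤ | n ∈ Sminus f ∧ n + 1 ∈ Splus f}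

/-! ### Auxiliary definitions and lemmas -/

/-- Sum of `|f|` over the integer interval `[a,b]`. -/
noncomputable def Ssum (f : ℤ → ℝ) (a b : ℤ) : ℝ := ∑ m ∈ Finset.Icc a b, |f m|

lemma avg_eq (f : ℤ → ℝ) (r s : ℕ) (n : ℤ) :
    avg f r s n = (1 / (r + s + 1 : ℝ)) * Ssum f (n - r) (n + s) := by
  unfold avg Ssum
  congr 1
  have he : Finset.Icc (n - (r:ℤ)) (n + s) =
      Finset.map (addLeftEmbedding n) (Finset.Icc (-(r:ℤ)) s) := by
    ext x
    simp only [addLeftEmbedding, Finset.mem_map, Finset.mem_Icc, Function.Embedding.coeFn_mk]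
    constructor
    · intro h; exact ⟨x - n, by omega, by omega⟩
    · rintro ⟨y, hy, rfl⟩; omega
  rw [he, Finset.sum_map]
  rfl

lemma Ssum_nonneg (f : ℤ → ℝ) (a b : ℤ) : 0 ≤ Ssum f a b :=
  Finset.sum_nonneg fun _ _ => abs_nonneg _

lemma Ssum_mono (f : ℤ → ℝ) {a b a' b' : ℤ} (h1 : a' ≤ a) (h2 : b ≤ b') :
    Ssum f a b ≤ Ssum f a' b' :=
  Finset.sum_le_sum_of_subset_of_nonneg (Finset.Icc_subset_Icc h1 h2)
    (fun _ _ _ => abs_nonneg _)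

lemma Ssum_split_top (f : ℤ → ℝ) {a b : ℤ} (h : a ≤ b) : Ssum f a b = Ssum f a (b-1) + |f b| := by
  unfold Ssum
  have he : Finset.Icc a b = insert b (Finset.Icc a (b-1)) := by
    ext x; simp only [Finset.mem_Icc, Finset.mem_insert]; omega
  rw [he, Finset.sum_insert (by simp only [Finset.mem_Icc]; omega)]
  ring

lemma Ssum_split_bot (f : ℤ → ℝ) {a b : ℤ} (h : a ≤ b) : Ssum f a b = |f a| + Ssum f (a+1) b := by
  unfold Ssum
  have he : Finset.Icc a b = insert a (Finset.Icc (a+1) b) := by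
    ext x; simp only [Finset.mem_Icc, Finset.mem_insert]; omega
  rw [he, Finset.sum_insert (by simp only [Finset.mem_Icc]; omega)]

lemma chi_nonneg (A : Set ℤ) (n : ℤ) : 0 ≤ chi A n := by
  unfold chi; split <;> norm_num

lemma chi_le_one (A : Set ℤ) (n : ℤ) : chi A n ≤ 1 := by
  unfold chi; split <;> norm_num

lemma abs_chi (A : Set ℤ) (n : ℤ) : |chi A n| = chi A n :=
  abs_of_nonneg (chi_nonneg A n)

lemma card_Icc_real (r s : ℕ) : ((Finset.Icc (-(r:ℤ)) (s:ℤ)).card : ℝ) = (r : ℝ) + s + 1 := by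
  rw [Int.card_Icc]
  have h : ((s:ℤ) + 1 - -(r:ℤ)).toNat = r + s + 1 := by omega
  rw [h]; push_cast; ring

lemma avg_nonneg (f : ℤ → ℝ) (r s : ℕ) (n : ℤ) : 0 ≤ avg f r s n := by
  unfold avg
  apply mul_nonneg (by positivity)
  exact Finset.sum_nonneg fun _ _ => abs_nonneg _

lemma avg_le_one (A : Set ℤ) (r s : ℕ) (n : ℤ) : avg (chi A) r s n ≤ 1 := by
  unfold avg
  have hL : (0:ℝ) < (r : ℝ) + s + 1 := by positivity
  have hsum : ∑ j ∈ Finset.Icc (-(r:ℤ)) (s:ℤ), |chi A (n + j)| ≤ (r : ℝ) + s + 1 := by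
    calc ∑ j ∈ Finset.Icc (-(r:ℤ)) (s:ℤ), |chi A (n + j)|
        ≤ (Finset.Icc (-(r:ℤ)) (s:ℤ)).card • (1:ℝ) := by
          apply Finset.sum_le_card_nsmul
          intro x _
          rw [abs_chi]; exact chi_le_one A _
      _ = (r : ℝ) + s + 1 := by rw [nsmul_eq_mul, mul_one, card_Icc_real]
  rw [div_mul_eq_mul_div, one_mul, div_le_one hL]
  exact hsum

lemma avg_le_M (A : Set ℤ) (r s : ℕ) (n : ℤ) : avg (chi A) r s n ≤ M (chi A) n := by
  have hb1 : BddAbove (Set.range fun s' => avg (chi A) r s' n) :=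
    ⟨1, by rintro _ ⟨s', rfl⟩; exact avg_le_one A r s' n⟩
  have hb2 : BddAbove (Set.range fun r' => ⨆ s' : ℕ, avg (chi A) r' s' n) :=
    ⟨1, by rintro _ ⟨r', rfl⟩; exact ciSup_le fun s' => avg_le_one A r' s' n⟩
  calc avg (chi A) r s n ≤ ⨆ s' : ℕ, avg (chi A) r s' n := le_ciSup hb1 s
    _ ≤ M (chi A) n := le_ciSup hb2 r

lemma M_le (A : Set ℤ) (n : ℤ) {c : ℝ} (h : ∀ r s : ℕ, avg (chi A) r s n ≤ c) :
    M (chi A) n ≤ c :=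
  ciSup_le fun r => ciSup_le fun s => h r s

lemma M_le_one (A : Set ℤ) (n : ℤ) : M (chi A) n ≤ 1 :=
  M_le A n (fun r s => avg_le_one A r s n)

lemma avg_zero_zero (f : ℤ → ℝ) (n : ℤ) : avg f 0 0 n = |f n| := by
  unfold avg
  norm_num

lemma M_nonneg (A : Set ℤ) (n : ℤ) : 0 ≤ M (chi A) n :=
  le_trans (avg_nonneg _ 0 0 n) (avg_le_M A 0 0 n)

lemma M_ge_chi (A : Set ℤ) (n : ℤ) : chi A n ≤ M (chi A) n := by
  have h := avg_le_M A 0 0 n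
  rwa [avg_zero_zero, abs_chi] at h

lemma M_eq_one (A : Set ℤ) {n : ℤ} (h : n ∈ A) : M (chi A) n = 1 := by
  refine le_antisymm (M_le_one A n) ?_
  have h2 := M_ge_chi A n
  rwa [chi, if_pos h] at h2

/-- Any interval average is at most the maximal function at any point of the interval. -/
lemma interval_le_M (A : Set ℤ) {a b n : ℤ} (ha : a ≤ n) (hb : n ≤ b) :
    (1/((b:ℝ) - a + 1)) * Ssum (chi A) a b ≤ M (chi A) n := by
  have h := avg_le_M A (n - a).toNat (b - n).toNat n
  rw [avg_eq] at h
  have h1 : (((n - a).toNat : ℕ) : ℤ) = n - a := Int.toNat_of_nonneg (by omega)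
  have h2 : (((b - n).toNat : ℕ) : ℤ) = b - n := Int.toNat_of_nonneg (by omega)
  have c1 : (((n - a).toNat : ℕ) : ℝ) = (n:ℝ) - a := by
    rw [← Int.cast_natCast (R := ℝ), h1]; push_cast; ring
  have c2 : (((b - n).toNat : ℕ) : ℝ) = (b:ℝ) - n := by
    rw [← Int.cast_natCast (R := ℝ), h2]; push_cast; ring
  rw [show n - (((n - a).toNat : ℕ) : ℤ) = a by omega,
    show n + (((b - n).toNat : ℕ) : ℤ) = b by omega, c1, c2] at h
  have e : (n:ℝ) - a + ((b:ℝ) - n) + 1 = (b:ℝ) - a + 1 := by ring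
  rwa [e] at h

lemma avg_ineq {T L : ℝ} (hT : 0 ≤ T) (hL : 2 ≤ L) :
    2 * (1/L * T) ≤ 1/(L-1) * T + 1/(L+1) * T := by
  have h1 : (0:ℝ) < L - 1 := by linarith
  have h3 : (0:ℝ) < L := by linarith
  have key : 2/L ≤ 1/(L-1) + 1/(L+1) := by
    rw [div_add_div _ _ h1.ne' (by positivity : ((L:ℝ)+1) ≠ 0),
      div_le_div_iff₀ h3 (by positivity)]
    nlinarith
  calc 2*(1/L*T) = (2/L)*T := by ring
    _ ≤ (1/(L-1) + 1/(L+1))*T := mul_le_mul_of_nonneg_right key hT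
    _ = 1/(L-1) * T + 1/(L+1) * T := by ring

/-- Key convexity lemma: the maximal function is convex off `A`. -/
lemma convex_off (A : Set ℤ) {n : ℤ} (hn : n ∉ A) :
    2 * M (chi A) n ≤ M (chi A) (n-1) + M (chi A) (n+1) := by
  have hchi : |chi A n| = 0 := by rw [chi, if_neg hn, abs_zero]
  have key2 : ∀ a b : ℤ, a ≤ n → n ≤ b →
      2 * (1/((b:ℝ) - a + 1) * Ssum (chi A) a b) ≤ M (chi A) (n-1) + M (chi A) (n+1) := by
    intro a b ha hb
    rcases lt_or_eq_of_le ha with ha' | rfl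
    · rcases lt_or_eq_of_le hb with hb' | rfl
      · have h1 := interval_le_M A (n := n-1) (by omega : a ≤ n-1) (by omega : n-1 ≤ b)
        have h2 := interval_le_M A (n := n+1) (by omega : a ≤ n+1) (by omega : n+1 ≤ b)
        linarith
      · -- a < n = b
        set T := Ssum (chi A) a (n-1) with hTdef
        have hT0 : 0 ≤ T := Ssum_nonneg _ _ _
        have hfull : Ssum (chi A) a n = T := by rw [Ssum_split_top (chi A) (by omega), hchi]; ring
        set L : ℝ := (n:ℝ) - a + 1 with hLdef
        have hL : 2 ≤ L := by
          have : (a:ℝ) ≤ (n:ℝ) - 1 := by exact_mod_cast (by omega : a ≤ n - 1)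
          rw [hLdef]; linarith
        have hm1 : 1/(L-1) * T ≤ M (chi A) (n-1) := by
          have h := interval_le_M A (n := n-1) (by omega : a ≤ n-1) (le_refl (n-1))
          have e : ((n-1:ℤ):ℝ) - a + 1 = L - 1 := by push_cast; ring
          rwa [e, ← hTdef] at h
        have hp1 : 1/(L+1) * T ≤ M (chi A) (n+1) := by
          have h := interval_le_M A (n := n+1) (by omega : a ≤ n+1) (le_refl (n+1))
          have e : ((n+1:ℤ):ℝ) - a + 1 = L + 1 := by push_cast; ring
          rw [e] at h
          have hmono : T ≤ Ssum (chi A) a (n+1) := by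
            rw [hTdef]; exact Ssum_mono _ (le_refl _) (by omega)
          calc 1/(L+1) * T ≤ 1/(L+1) * Ssum (chi A) a (n+1) :=
                mul_le_mul_of_nonneg_left hmono (by positivity)
            _ ≤ _ := h
        calc 2 * (1/((n:ℝ) - a + 1) * Ssum (chi A) a n) = 2 * (1/L * T) := by rw [hfull]
          _ ≤ 1/(L-1) * T + 1/(L+1) * T := avg_ineq hT0 hL
          _ ≤ _ := by linarith
    · rcases lt_or_eq_of_le hb with hb' | rfl
      · -- a = n < b  (here n was replaced by a)
        set T := Ssum (chi A) (a+1) b with hTdef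
        have hT0 : 0 ≤ T := Ssum_nonneg _ _ _
        have hfull : Ssum (chi A) a b = T := by rw [Ssum_split_bot (chi A) (by omega), hchi]; ring
        set L : ℝ := (b:ℝ) - a + 1 with hLdef
        have hL : 2 ≤ L := by
          have : (a:ℝ) + 1 ≤ (b:ℝ) := by exact_mod_cast (by omega : a + 1 ≤ b)
          rw [hLdef]; linarith
        have hp1 : 1/(L-1) * T ≤ M (chi A) (a+1) := by
          have h := interval_le_M A (n := a+1) (le_refl (a+1)) (by omega : a+1 ≤ b)
          have e : (b:ℝ) - ((a+1:ℤ):ℝ) + 1 = L - 1 := by push_cast; ring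
          rwa [e, ← hTdef] at h
        have hm1 : 1/(L+1) * T ≤ M (chi A) (a-1) := by
          have h := interval_le_M A (n := a-1) (le_refl (a-1)) (by omega : a-1 ≤ b)
          have e : (b:ℝ) - ((a-1:ℤ):ℝ) + 1 = L + 1 := by push_cast; ring
          rw [e] at h
          have hmono : T ≤ Ssum (chi A) (a-1) b := by
            rw [hTdef]; exact Ssum_mono _ (by omega) (le_refl _)
          calc 1/(L+1) * T ≤ 1/(L+1) * Ssum (chi A) (a-1) b :=
                mul_le_mul_of_nonneg_left hmono (by positivity)
            _ ≤ _ := h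
        calc 2 * (1/((b:ℝ) - a + 1) * Ssum (chi A) a b) = 2 * (1/L * T) := by rw [hfull]
          _ ≤ 1/(L-1) * T + 1/(L+1) * T := avg_ineq hT0 hL
          _ ≤ _ := by linarith
      · -- a = n = b
        have hz : Ssum (chi A) a a = 0 := by
          unfold Ssum; rw [Finset.Icc_self, Finset.sum_singleton, hchi]
        rw [hz]
        have := M_nonneg A (a-1); have := M_nonneg A (a+1); linarith
  have key : ∀ r s : ℕ, avg (chi A) r s n ≤ (M (chi A) (n-1) + M (chi A) (n+1)) / 2 := by
    intro r s
    rw [avg_eq]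
    have h := key2 (n - r) (n + s) (by omega) (by omega)
    have e : ((n + (s:ℕ) : ℤ):ℝ) - ((n - (r:ℕ) : ℤ):ℝ) + 1 = (r:ℝ) + s + 1 := by push_cast; ring
    rw [e] at h
    linarith
  have h := M_le A n key
  linarith

/-- Pointwise bound of the negative part of the second derivative of `M(chi A)`. -/
lemma negpart_le (A : Set ℤ) (n : ℤ) :
    max (-(M (chi A) (n+2) - 2 * M (chi A) (n+1) + M (chi A) n)) 0 ≤
      |chi A (n+2) - 2 * chi A (n+1) + chi A n| := by
  by_cases h1 : n + 1 ∈ A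
  · have hM1 : M (chi A) (n+1) = 1 := M_eq_one A h1
    have hM0le := M_le_one A n
    have hM2le := M_le_one A (n+2)
    have hM0ge := M_nonneg A n
    have hM2ge := M_nonneg A (n+2)
    by_cases h0 : n ∈ A <;> by_cases h2 : n + 2 ∈ A
    · have e0 : M (chi A) n = 1 := M_eq_one A h0
      have e2 : M (chi A) (n+2) = 1 := M_eq_one A h2
      apply max_le _ (abs_nonneg _)
      rw [e0, e2, hM1]; norm_num
    · have e0 : M (chi A) n = 1 := M_eq_one A h0
      have hc : |chi A (n+2) - 2 * chi A (n+1) + chi A n| = 1 := by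
        rw [chi, chi, chi, if_neg h2, if_pos h1, if_pos h0]; norm_num
      rw [hc]
      apply max_le _ (by norm_num)
      rw [e0, hM1]; linarith
    · have e2 : M (chi A) (n+2) = 1 := M_eq_one A h2
      have hc : |chi A (n+2) - 2 * chi A (n+1) + chi A n| = 1 := by
        rw [chi, chi, chi, if_pos h2, if_pos h1, if_neg h0]; norm_num
      rw [hc]
      apply max_le _ (by norm_num)
      rw [e2, hM1]; linarith
    · have hc : |chi A (n+2) - 2 * chi A (n+1) + chi A n| = 2 := by
        rw [chi, chi, chi, if_neg h2, if_pos h1, if_neg h0]; norm_num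
      rw [hc]
      apply max_le _ (by norm_num)
      rw [hM1]; linarith
  · have h := convex_off A h1
    rw [show n + 1 - 1 = n by ring, show n + 1 + 1 = n + 2 by ring] at h
    have : max (-(M (chi A) (n+2) - 2 * M (chi A) (n+1) + M (chi A) n)) 0 = 0 :=
      max_eq_right (by linarith)
    rw [this]
    exact abs_nonneg _

/-- `|x| = x + 2 max(-x, 0)`. -/
lemma abs_eq_add_negpart (x : ℝ) : |x| = x + 2 * max (-x) 0 := by
  rcases le_total 0 x with h | h
  · rw [abs_of_nonneg h, max_eq_right (by linarith)]; ring
  · rw [abs_of_nonpos h, max_eq_left (by linarith)]; ring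

/-- Telescoping sum of second differences. -/
lemma sum_D2 (u : ℤ → ℝ) (a : ℤ) : ∀ b : ℤ, a ≤ b →
    ∑ n ∈ Finset.Icc a b, (u (n+2) - 2 * u (n+1) + u n)
      = (u (b+2) - u (b+1)) - (u (a+1) - u a) := by
  refine Int.le_induction ?_ ?_
  · rw [Finset.Icc_self, Finset.sum_singleton]; ring
  · intro b hb ih
    have he : Finset.Icc a (b+1) = insert (b+1) (Finset.Icc a b) := by
      ext x; simp only [Finset.mem_Icc, Finset.mem_insert]; omega
    rw [he, Finset.sum_insert (by simp only [Finset.mem_Icc]; omega), ih]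
    have e1 : b + 1 + 2 = b + 3 := by ring
    have e2 : b + 1 + 1 = b + 2 := by ring
    rw [e1, e2]
    ring

/-- Main finite-window estimate. -/
lemma window_bound (A : Set ℤ) {a b : ℤ} (hab : a ≤ b) :
    ∑ n ∈ Finset.Icc a b, |M (chi A) (n+2) - 2 * M (chi A) (n+1) + M (chi A) n|
      ≤ 2 + 2 * ∑ n ∈ Finset.Icc a b, |chi A (n+2) - 2 * chi A (n+1) + chi A n| := by
  have key : ∑ n ∈ Finset.Icc a b, |M (chi A) (n+2) - 2 * M (chi A) (n+1) + M (chi A) n|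
      = (∑ n ∈ Finset.Icc a b, (M (chi A) (n+2) - 2 * M (chi A) (n+1) + M (chi A) n))
        + 2 * ∑ n ∈ Finset.Icc a b,
            max (-(M (chi A) (n+2) - 2 * M (chi A) (n+1) + M (chi A) n)) 0 := by
    rw [Finset.mul_sum, ← Finset.sum_add_distrib]
    exact Finset.sum_congr rfl fun n _ => abs_eq_add_negpart _
  rw [key, sum_D2 (M (chi A)) a b hab]
  have h1 : (M (chi A) (b+2) - M (chi A) (b+1)) - (M (chi A) (a+1) - M (chi A) a) ≤ 2 := by
    have := M_le_one A (b+2); have := M_nonneg A (b+1)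
    have := M_le_one A a; have := M_nonneg A (a+1)
    linarith
  have h2 : ∑ n ∈ Finset.Icc a b, max (-(M (chi A) (n+2) - 2 * M (chi A) (n+1) + M (chi A) n)) 0
      ≤ ∑ n ∈ Finset.Icc a b, |chi A (n+2) - 2 * chi A (n+1) + chi A n| :=
    Finset.sum_le_sum fun n _ => negpart_le A n
  linarith

lemma chi_vals (A : Set ℤ) (n : ℤ) : chi A n = 0 ∨ chi A n = 1 := by
  unfold chi; split <;> simp

theorem second_derivative_of_maximal_of_char (A : Set ℤ) :
    ∑' n : ℤ, ENNReal.ofReal |M (chi A) (n + 2) - 2 * M (chi A) (n + 1) + M (chi A) n| ≤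
      3 * ∑' n : ℤ, ENNReal.ofReal |chi A (n + 2) - 2 * chi A (n + 1) + chi A n| := by
  by_cases hconst : ∀ k : ℤ, chi A (k+1) = chi A k
  · -- constant case : M is constant, LHS = 0
    have hchi : ∀ n : ℤ, chi A n = chi A 0 := by
      intro n
      induction n using Int.induction_on with
      | zero => rfl
      | succ k ih => rw [hconst k, ih]
      | pred k ih =>
        have h := hconst (-(k:ℤ) - 1)
        rw [show -(k:ℤ) - 1 + 1 = -(k:ℤ) by ring] at h
        rw [← h, ih]
    have hM : ∀ n : ℤ, M (chi A) n = |chi A 0| := by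
      intro n
      have havg : ∀ r s : ℕ, avg (chi A) r s n = |chi A 0| := by
        intro r s
        unfold avg
        have hs : ∑ j ∈ Finset.Icc (-(r:ℤ)) (s:ℤ), |chi A (n + j)|
            = ((Finset.Icc (-(r:ℤ)) (s:ℤ)).card : ℝ) * |chi A 0| := by
          rw [Finset.sum_congr rfl (fun j _ => by rw [hchi (n+j)]), Finset.sum_const,
            nsmul_eq_mul]
        rw [hs, card_Icc_real]
        have : ((r:ℝ) + s + 1) ≠ 0 := by positivity
        field_simp
      unfold M
      rw [iSup_congr fun r => iSup_congr fun s => havg r s]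
      rw [ciSup_const, ciSup_const]
    have hzero : ∀ n : ℤ, |M (chi A) (n + 2) - 2 * M (chi A) (n + 1) + M (chi A) n| = 0 := by
      intro n
      rw [hM, hM, hM]; ring_nf; simp
    simp only [hzero, ENNReal.ofReal_zero, tsum_zero]
    exact zero_le
  · push_neg at hconst
    obtain ⟨m, hm⟩ := hconst
    set R := ∑' n : ℤ, ENNReal.ofReal |chi A (n + 2) - 2 * chi A (n + 1) + chi A n| with hR
    -- R ≥ 2
    have hstep : |chi A (m+1) - chi A m| = 1 := by
      rcases chi_vals A (m+1) with h | h <;> rcases chi_vals A m with h' | h' <;>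
        rw [h, h'] at hm ⊢ <;> norm_num at hm <;> norm_num
    have hterm1 : (1:ℝ) ≤ |chi A ((m-1) + 2) - 2 * chi A ((m-1) + 1) + chi A (m-1)| := by
      rw [show (m-1) + 2 = m + 1 by ring, show (m-1) + 1 = m by ring]
      rcases chi_vals A (m+1) with h | h <;> rcases chi_vals A m with h' | h' <;>
        rcases chi_vals A (m-1) with h'' | h'' <;>
        rw [h, h'] at hm <;> rw [h, h', h''] <;> norm_num at hm <;> norm_num
    have hterm2 : (1:ℝ) ≤ |chi A (m + 2) - 2 * chi A (m + 1) + chi A m| := by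
      rcases chi_vals A (m+2) with h | h <;> rcases chi_vals A (m+1) with h' | h' <;>
        rcases chi_vals A m with h'' | h'' <;>
        rw [h', h''] at hm <;> rw [h, h', h''] <;> norm_num at hm <;> norm_num
    have hR2 : (2:ENNReal) ≤ R := by
      have hle := ENNReal.sum_le_tsum
        (f := fun n : ℤ => ENNReal.ofReal |chi A (n+2) - 2*chi A (n+1) + chi A n|)
        ({m-1, m} : Finset ℤ)
      rw [Finset.sum_pair (by omega : m - 1 ≠ m)] at hle
      refine le_trans ?_ hle
      have o1 : (1:ENNReal) ≤ ENNReal.ofReal |chi A ((m-1)+2) - 2*chi A ((m-1)+1) + chi A (m-1)| := by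
        rw [← ENNReal.ofReal_one]; exact ENNReal.ofReal_le_ofReal hterm1
      have o2 : (1:ENNReal) ≤ ENNReal.ofReal |chi A (m+2) - 2*chi A (m+1) + chi A m| := by
        rw [← ENNReal.ofReal_one]; exact ENNReal.ofReal_le_ofReal hterm2
      calc (2:ENNReal) = 1 + 1 := by norm_num
        _ ≤ _ := add_le_add o1 o2
    -- main bound
    rw [ENNReal.tsum_eq_iSup_sum]
    apply iSup_le
    intro F
    rcases F.eq_empty_or_nonempty with rfl | hF
    · simp
    · set a := F.min' hF
      set b := F.max' hF
      have hab : a ≤ b := F.min'_le b (F.max'_mem hF)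
      have hsub : F ⊆ Finset.Icc a b := fun x hx =>
        Finset.mem_Icc.mpr ⟨F.min'_le x hx, F.le_max' x hx⟩
      calc ∑ n ∈ F, ENNReal.ofReal |M (chi A) (n + 2) - 2 * M (chi A) (n + 1) + M (chi A) n|
          ≤ ∑ n ∈ Finset.Icc a b,
              ENNReal.ofReal |M (chi A) (n + 2) - 2 * M (chi A) (n + 1) + M (chi A) n| :=
            Finset.sum_le_sum_of_subset hsub
        _ = ENNReal.ofReal (∑ n ∈ Finset.Icc a b,
              |M (chi A) (n + 2) - 2 * M (chi A) (n + 1) + M (chi A) n|) :=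
            (ENNReal.ofReal_sum_of_nonneg fun _ _ => abs_nonneg _).symm
        _ ≤ ENNReal.ofReal (2 + 2 * ∑ n ∈ Finset.Icc a b,
              |chi A (n + 2) - 2 * chi A (n + 1) + chi A n|) :=
            ENNReal.ofReal_le_ofReal (window_bound A hab)
        _ = 2 + 2 * ENNReal.ofReal (∑ n ∈ Finset.Icc a b,
              |chi A (n + 2) - 2 * chi A (n + 1) + chi A n|) := by
            rw [ENNReal.ofReal_add (by norm_num)
              (by positivity), ENNReal.ofReal_mul (by norm_num)]
            norm_num
        _ = 2 + 2 * ∑ n ∈ Finset.Icc a b,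
              ENNReal.ofReal |chi A (n + 2) - 2 * chi A (n + 1) + chi A n| := by
            rw [ENNReal.ofReal_sum_of_nonneg fun _ _ => abs_nonneg _]
        _ ≤ R + 2 * R := add_le_add hR2 (mul_le_mul_right (ENNReal.sum_le_tsum _) 2)
        _ = 3 * R := by ring
end

section
/- Let f : ℤ → ℝ. Then ‖f''‖₁ ≤ limsup_{n→∞} |f(n+1) − f(n)| + limsup_{n→∞} |f(−n−1) − f(−n)| + 2 Σ_{n ∈ ∂ₗS₋f} (f(n) − f(n−1))⁺ + 2 Σ_{n ∈ ∂ᵣS₋f} (f(n) − f(n+1))⁺, where all quantities are interpreted in the extended nonnegative reals (each boundary summand (x)⁺ = ENNReal.ofReal x is the positive part, the boundary sums are tsums over the possibly infinite boundary sets, and the limsups are taken along n → ∞ in ℕ). -/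
open Classical

namespace SDBB

/-- Discrete derivative. -/
noncomputable def gg (f : ℤ → ℝ) (n : ℤ) : ℝ := f (n + 1) - f n

lemma sminus_iff (f : ℤ → ℝ) (n : ℤ) : n ∈ Sminus f ↔ gg f n < gg f (n - 1) := by
  have h : n - 1 + 1 = n := by ring
  simp only [Sminus, Splus, Set.mem_compl_iff, Set.mem_setOf_eq, not_le, gg, h]
  constructor <;> intro <;> linarith

lemma splus_iff (f : ℤ → ℝ) (n : ℤ) : n ∈ Splus f ↔ gg f (n - 1) ≤ gg f n := by
  have h : n - 1 + 1 = n := by ring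
  simp only [Splus, Set.mem_setOf_eq, gg, h]
  constructor <;> intro <;> linarith

lemma not_sminus (f : ℤ → ℝ) (n : ℤ) : n ∉ Sminus f ↔ n ∈ Splus f := not_not

lemma mem_bdl (f : ℤ → ℝ) (n : ℤ) : n ∈ bdl f ↔ n ∈ Sminus f ∧ n - 1 ∈ Splus f := Iff.rfl

lemma mem_bdr (f : ℤ → ℝ) (n : ℤ) : n ∈ bdr f ↔ n ∈ Sminus f ∧ n + 1 ∈ Splus f := Iff.rfl

lemma telescope (f : ℤ → ℝ) (l : ℤ) :
    ∀ r : ℤ, l - 1 ≤ r →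
      ∑ m ∈ Finset.Icc l r, (gg f m - gg f (m - 1)) = gg f r - gg f (l - 1) := by
  refine Int.le_induction ?_ ?_
  · rw [Finset.Icc_eq_empty (by omega)]
    simp
  · intro r hr ih
    have hins : Finset.Icc l (r + 1) = insert (r + 1) (Finset.Icc l r) := by
      ext x; simp only [Finset.mem_Icc, Finset.mem_insert]; omega
    rw [hins, Finset.sum_insert (by simp only [Finset.mem_Icc]; omega), ih,
      show r + 1 - 1 = r from by ring]
    ring

/-- Key induction: bound on the sum of negative parts of increments of `gg`. -/
lemma key (f : ℤ → ℝ) (l : ℤ) :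
    ∀ r : ℤ, l - 1 ≤ r →
      ∑ m ∈ Finset.Icc l r, max (gg f (m - 1) - gg f m) 0 ≤
        (if ∀ m ∈ Finset.Icc (l - 1) r, m ∈ Sminus f then gg f (l - 1)
          else max (gg f (l - 1)) 0)
        + ∑ m ∈ (Finset.Icc l r).filter (· ∈ bdl f), max (gg f (m - 1)) 0
        + ∑ m ∈ (Finset.Ico l r).filter (· ∈ bdr f), max (-(gg f m)) 0
        + (if r ∈ Sminus f then -(gg f r) else 0) := by
  refine Int.le_induction ?_ ?_
  · have he : Finset.Icc l (l - 1) = ∅ := Finset.Icc_eq_empty (by omega)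
    have he' : Finset.Ico l (l - 1) = ∅ := Finset.Ico_eq_empty (by omega)
    rw [he, he']
    simp only [Finset.filter_empty, Finset.sum_empty, add_zero, zero_add]
    by_cases h : (l - 1) ∈ Sminus f
    · have hc : ∀ m ∈ Finset.Icc (l - 1) (l - 1), m ∈ Sminus f := by
        intro m hm; simp only [Finset.mem_Icc] at hm
        have : m = l - 1 := by omega
        rwa [this]
      rw [if_pos hc, if_pos h]
      linarith
    · have hc : ¬ ∀ m ∈ Finset.Icc (l - 1) (l - 1), m ∈ Sminus f := by
        intro hh; exact h (hh _ (by simp))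
      rw [if_neg hc, if_neg h]
      have := le_max_right (gg f (l - 1)) (0 : ℝ)
      linarith
  · intro r hr ih
    set SL := ∑ m ∈ (Finset.Icc l r).filter (· ∈ bdl f), max (gg f (m - 1)) 0 with hSL
    set SR := ∑ m ∈ (Finset.Ico l r).filter (· ∈ bdr f), max (-(gg f m)) 0 with hSR
    have hins : Finset.Icc l (r + 1) = insert (r + 1) (Finset.Icc l r) := by
      ext x; simp only [Finset.mem_Icc, Finset.mem_insert]; omega
    have hLHS : ∑ m ∈ Finset.Icc l (r + 1), max (gg f (m - 1) - gg f m) 0 =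
        max (gg f r - gg f (r + 1)) 0 + ∑ m ∈ Finset.Icc l r, max (gg f (m - 1) - gg f m) 0 := by
      rw [hins, Finset.sum_insert (by simp only [Finset.mem_Icc]; omega),
        show r + 1 - 1 = r from by ring]
    have hL : ∑ m ∈ (Finset.Icc l (r + 1)).filter (· ∈ bdl f), max (gg f (m - 1)) 0 =
        (if r + 1 ∈ bdl f then max (gg f r) 0 else 0) + SL := by
      rw [hins, Finset.filter_insert]
      by_cases hb : r + 1 ∈ bdl f
      · rw [if_pos hb, if_pos hb,
          Finset.sum_insert (by simp only [Finset.mem_filter, Finset.mem_Icc]; omega),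
          show r + 1 - 1 = r from by ring]
      · rw [if_neg hb, if_neg hb, zero_add]
    have hR : ∑ m ∈ (Finset.Ico l (r + 1)).filter (· ∈ bdr f), max (-(gg f m)) 0 =
        (if l ≤ r ∧ r ∈ bdr f then max (-(gg f r)) 0 else 0) + SR := by
      by_cases hlr : l ≤ r
      · have h1 : Finset.Ico l (r + 1) = insert r (Finset.Ico l r) := by
          ext x; simp only [Finset.mem_Ico, Finset.mem_insert]; omega
        rw [h1, Finset.filter_insert]
        by_cases hb : r ∈ bdr f
        · rw [if_pos hb, if_pos ⟨hlr, hb⟩,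
            Finset.sum_insert (by simp only [Finset.mem_filter, Finset.mem_Ico]; omega)]
        · rw [if_neg hb, if_neg (by tauto), zero_add]
      · have h1 : Finset.Ico l (r + 1) = ∅ := Finset.Ico_eq_empty (by omega)
        have h2 : Finset.Ico l r = ∅ := Finset.Ico_eq_empty (by omega)
        rw [h1, if_neg (by tauto), hSR, h2]
        simp
    have hC : (∀ m ∈ Finset.Icc (l - 1) (r + 1), m ∈ Sminus f) ↔
        ((∀ m ∈ Finset.Icc (l - 1) r, m ∈ Sminus f) ∧ (r + 1) ∈ Sminus f) := by
      constructor
      · intro h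
        refine ⟨fun m hm => h m ?_, h _ (by simp only [Finset.mem_Icc]; omega)⟩
        simp only [Finset.mem_Icc] at hm ⊢; omega
      · rintro ⟨h1, h2⟩ m hm
        simp only [Finset.mem_Icc] at hm
        by_cases hm' : m ≤ r
        · exact h1 m (by simp only [Finset.mem_Icc]; omega)
        · have : m = r + 1 := by omega
          rwa [this]
    have hcondle : (if ∀ m ∈ Finset.Icc (l - 1) r, m ∈ Sminus f then gg f (l - 1)
        else max (gg f (l - 1)) 0) ≤ max (gg f (l - 1)) 0 := by
      split_ifs with h
      · exact le_max_left _ _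
      · exact le_rfl
    rw [hLHS, hL, hR]
    by_cases hr1 : (r + 1) ∈ Sminus f
    · -- new top point is concave
      have hgr1 : gg f (r + 1) < gg f r := by
        have := (sminus_iff f (r + 1)).mp hr1
        rwa [show r + 1 - 1 = r from by ring] at this
      have ht : max (gg f r - gg f (r + 1)) 0 = gg f r - gg f (r + 1) :=
        max_eq_left (by linarith)
      rw [ht, if_pos hr1]
      by_cases hrm : r ∈ Sminus f
      · -- continuing a concave run
        have hb1 : r + 1 ∉ bdl f := by
          intro h
          have h2 := h.2
          rw [show r + 1 - 1 = r from by ring] at h2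
          exact hrm h2
        have hb2 : ¬(l ≤ r ∧ r ∈ bdr f) := fun h => hr1 h.2.2
        rw [if_neg hb1, if_neg hb2, if_pos hrm] at *
        have hcondeq : (if ∀ m ∈ Finset.Icc (l - 1) (r + 1), m ∈ Sminus f then gg f (l - 1)
            else max (gg f (l - 1)) 0) =
            (if ∀ m ∈ Finset.Icc (l - 1) r, m ∈ Sminus f then gg f (l - 1)
            else max (gg f (l - 1)) 0) := by
          by_cases h : ∀ m ∈ Finset.Icc (l - 1) r, m ∈ Sminus f
          · rw [if_pos h, if_pos (hC.mpr ⟨h, hr1⟩)]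
          · rw [if_neg h, if_neg (fun hh => h (hC.mp hh).1)]
        rw [hcondeq]
        linarith
      · -- entering a concave run from a convex point
        have hsp : r ∈ Splus f := (not_sminus f r).mp hrm
        have hb1 : r + 1 ∈ bdl f := by
          refine ⟨hr1, ?_⟩
          rwa [show r + 1 - 1 = r from by ring]
        have hb2 : ¬(l ≤ r ∧ r ∈ bdr f) := fun h => hrm h.2.1
        have hcondold : ¬ ∀ m ∈ Finset.Icc (l - 1) r, m ∈ Sminus f := by
          intro hh; exact hrm (hh r (by simp only [Finset.mem_Icc]; omega))
        have hcondnew : ¬ ∀ m ∈ Finset.Icc (l - 1) (r + 1), m ∈ Sminus f := by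
          intro hh; exact hrm (hh r (by simp only [Finset.mem_Icc]; omega))
        rw [if_pos hb1, if_neg hb2, if_neg hcondnew]
        rw [if_neg hcondold, if_neg hrm] at ih
        have h1 := le_max_left (gg f r) (0 : ℝ)
        linarith
    · -- new top point is convex
      have hsp1 : (r + 1) ∈ Splus f := (not_sminus f (r + 1)).mp hr1
      have hgr : gg f r ≤ gg f (r + 1) := by
        have := (splus_iff f (r + 1)).mp hsp1
        rwa [show r + 1 - 1 = r from by ring] at this
      have ht : max (gg f r - gg f (r + 1)) 0 = 0 := max_eq_right (by linarith)
      have hb1 : r + 1 ∉ bdl f := fun h => hr1 h.1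
      have hcondnew : ¬ ∀ m ∈ Finset.Icc (l - 1) (r + 1), m ∈ Sminus f := by
        intro hh; exact hr1 (hh (r + 1) (by simp only [Finset.mem_Icc]; omega))
      rw [ht, if_neg hb1, if_neg hr1, if_neg hcondnew]
      by_cases hrm : r ∈ Sminus f
      · by_cases hlr : l ≤ r
        · have hb2 : r ∈ bdr f := ⟨hrm, hsp1⟩
          rw [if_pos (⟨hlr, hb2⟩ : l ≤ r ∧ r ∈ bdr f)]
          rw [if_pos hrm] at ih
          have h1 := le_max_left (-(gg f r)) (0 : ℝ)
          linarith
        · have hre : r = l - 1 := by omega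
          rw [if_neg (fun h => hlr h.1)]
          have hcondold : ∀ m ∈ Finset.Icc (l - 1) r, m ∈ Sminus f := by
            intro m hm; simp only [Finset.mem_Icc] at hm
            have : m = r := by omega
            rwa [this]
          rw [if_pos hcondold, if_pos hrm] at ih
          have hgl : gg f (l - 1) = gg f r := by rw [hre]
          have h1 := le_max_right (gg f (l - 1)) (0 : ℝ)
          linarith
      · rw [if_neg (fun h => hrm h.2.1)]
        rw [if_neg hrm] at ih
        linarith

lemma habs (x : ℝ) : |x| = x + 2 * max (-x) 0 := by
  rcases le_total 0 x with h | h
  · rw [abs_of_nonneg h, max_eq_right (by linarith)]; ring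
  · rw [abs_of_nonpos h, max_eq_left (by linarith)]; ring

lemma ofReal_max_zero (x : ℝ) : ENNReal.ofReal (max x 0) = ENNReal.ofReal x := by
  rcases le_total x 0 with h | h
  · rw [max_eq_right h, ENNReal.ofReal_zero, ENNReal.ofReal_of_nonpos h]
  · rw [max_eq_left h]

/-- Real-valued window estimate. -/
lemma window (f : ℤ → ℝ) (l r : ℤ) (h : l - 1 ≤ r) :
    ∑ m ∈ Finset.Icc l r, |gg f m - gg f (m - 1)| ≤
      |gg f r| + |gg f (l - 1)|
      + 2 * ∑ m ∈ (Finset.Icc l r).filter (· ∈ bdl f), max (gg f (m - 1)) 0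
      + 2 * ∑ m ∈ (Finset.Ico l r).filter (· ∈ bdr f), max (-(gg f m)) 0 := by
  have hkey := key f l r h
  have htel := telescope f l r h
  have hsplit : ∑ m ∈ Finset.Icc l r, |gg f m - gg f (m - 1)| =
      ∑ m ∈ Finset.Icc l r, (gg f m - gg f (m - 1))
      + 2 * ∑ m ∈ Finset.Icc l r, max (gg f (m - 1) - gg f m) 0 := by
    rw [Finset.mul_sum, ← Finset.sum_add_distrib]
    refine Finset.sum_congr rfl fun m _ => ?_
    rw [habs (gg f m - gg f (m - 1)),
      show -(gg f m - gg f (m - 1)) = gg f (m - 1) - gg f m from by ring]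
  rw [hsplit, htel]
  have h1 : (if ∀ m ∈ Finset.Icc (l - 1) r, m ∈ Sminus f then gg f (l - 1)
      else max (gg f (l - 1)) 0) ≤ max (gg f (l - 1)) 0 := by
    split_ifs with h'
    exacts [le_max_left _ _, le_rfl]
  have h2 : (if r ∈ Sminus f then -(gg f r) else 0) ≤ max (-(gg f r)) 0 := by
    split_ifs with h'
    exacts [le_max_left _ _, le_max_right _ _]
  have h3 : |gg f r| = gg f r + 2 * max (-(gg f r)) 0 := habs _
  have h4 : |gg f (l - 1)| = -(gg f (l - 1)) + 2 * max (gg f (l - 1)) 0 := by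
    rw [← abs_neg, habs (-(gg f (l - 1))), neg_neg]
  linarith

end SDBB

open SDBB in
theorem second_derivative_boundary_bound (f : ℤ → ℝ) :
    ∑' n : ℤ, ENNReal.ofReal |f (n + 2) - 2 * f (n + 1) + f n| ≤
      Filter.limsup (fun n : ℕ => ENNReal.ofReal |f ((n : ℤ) + 1) - f (n : ℤ)|) Filter.atTop +
      Filter.limsup (fun n : ℕ => ENNReal.ofReal |f (-(n : ℤ) - 1) - f (-(n : ℤ))|) Filter.atTop +
      2 * ∑' m : ↥(bdl f), ENNReal.ofReal (f (m : ℤ) - f ((m : ℤ) - 1)) +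
      2 * ∑' m : ↥(bdr f), ENNReal.ofReal (f (m : ℤ) - f ((m : ℤ) + 1)) := by
  set T1 := ∑' m : ↥(bdl f), ENNReal.ofReal (f (m : ℤ) - f ((m : ℤ) - 1)) with hT1
  set T2 := ∑' m : ↥(bdr f), ENNReal.ofReal (f (m : ℤ) - f ((m : ℤ) + 1)) with hT2
  set a : ℕ → ENNReal := fun n => ENNReal.ofReal |f ((n : ℤ) + 1) - f (n : ℤ)| with ha
  set b : ℕ → ENNReal := fun n => ENNReal.ofReal |f (-(n : ℤ) - 1) - f (-(n : ℤ))| with hb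
  set P : ℕ → ENNReal := fun N => ∑ n ∈ Finset.Icc (-(N : ℤ) - 1) ((N : ℤ) - 1),
      ENNReal.ofReal |f (n + 2) - 2 * f (n + 1) + f n| with hP
  -- Step A : the tsum is bounded by the sup of the window sums
  have hsup : ∑' n : ℤ, ENNReal.ofReal |f (n + 2) - 2 * f (n + 1) + f n| ≤ ⨆ N : ℕ, P N := by
    rw [ENNReal.tsum_eq_iSup_sum]
    refine iSup_le fun s => ?_
    refine le_trans ?_ (le_iSup P ((s.sup fun n : ℤ => n.natAbs) + 1))
    simp only [hP]
    apply Finset.sum_le_sum_of_subset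
    intro n hn
    have h1 : n.natAbs ≤ s.sup fun n : ℤ => n.natAbs := Finset.le_sup (f := fun n : ℤ => n.natAbs) hn
    simp only [Finset.mem_Icc]
    omega
  -- Step B : each window sum is bounded
  have hPb : ∀ N : ℕ, P N ≤ a N + b N + (2 * T1 + 2 * T2) := by
    intro N
    have hlr : (-(N : ℤ)) - 1 ≤ (N : ℤ) := by omega
    have hre : P N = ∑ m ∈ Finset.Icc (-(N : ℤ)) (N : ℤ),
        ENNReal.ofReal |gg f m - gg f (m - 1)| := by
      simp only [hP]
      refine Finset.sum_nbij' (fun n => n + 1) (fun m => m - 1) ?_ ?_ ?_ ?_ ?_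
      · intro x hx; simp only [Finset.mem_Icc] at hx ⊢; omega
      · intro x hx; simp only [Finset.mem_Icc] at hx ⊢; omega
      · intro x _; ring
      · intro x _; ring
      · intro n _
        rw [gg, gg, show n + 1 - 1 = n from by ring, show n + 1 + 1 = n + 2 from by ring,
          show f (n + 2) - f (n + 1) - (f (n + 1) - f n) = f (n + 2) - 2 * f (n + 1) + f n
            from by ring]
    have hofsum : P N = ENNReal.ofReal
        (∑ m ∈ Finset.Icc (-(N : ℤ)) (N : ℤ), |gg f m - gg f (m - 1)|) := by
      rw [hre, ENNReal.ofReal_sum_of_nonneg fun m _ => abs_nonneg _]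
    have hw := window f (-(N : ℤ)) (N : ℤ) hlr
    have hsplit4 : ∀ x y z w : ℝ, ENNReal.ofReal (x + y + z + w) ≤
        ENNReal.ofReal x + ENNReal.ofReal y + ENNReal.ofReal z + ENNReal.ofReal w := by
      intro x y z w
      calc ENNReal.ofReal (x + y + z + w)
          ≤ ENNReal.ofReal (x + y + z) + ENNReal.ofReal w := ENNReal.ofReal_add_le
        _ ≤ ENNReal.ofReal (x + y) + ENNReal.ofReal z + ENNReal.ofReal w :=
            add_le_add ENNReal.ofReal_add_le le_rfl
        _ ≤ ENNReal.ofReal x + ENNReal.ofReal y + ENNReal.ofReal z + ENNReal.ofReal w :=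
            add_le_add (add_le_add ENNReal.ofReal_add_le le_rfl) le_rfl
    have haN : ENNReal.ofReal |gg f (N : ℤ)| = a N := rfl
    have hbN : ENNReal.ofReal |gg f (-(N : ℤ) - 1)| = b N := by
      simp only [hb, gg, show -(N : ℤ) - 1 + 1 = -(N : ℤ) from by ring, abs_sub_comm]
    have hSLb : ENNReal.ofReal
        (2 * ∑ m ∈ (Finset.Icc (-(N : ℤ)) (N : ℤ)).filter (· ∈ bdl f), max (gg f (m - 1)) 0)
        ≤ 2 * T1 := by
      rw [ENNReal.ofReal_mul (by norm_num : (0:ℝ) ≤ 2), ENNReal.ofReal_ofNat]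
      refine mul_le_mul_right ?_ 2
      rw [ENNReal.ofReal_sum_of_nonneg fun m _ => le_max_right _ _]
      calc ∑ m ∈ (Finset.Icc (-(N : ℤ)) (N : ℤ)).filter (· ∈ bdl f),
            ENNReal.ofReal (max (gg f (m - 1)) 0)
          = ∑ m ∈ (Finset.Icc (-(N : ℤ)) (N : ℤ)).filter (· ∈ bdl f),
            (bdl f).indicator (fun m => ENNReal.ofReal (f m - f (m - 1))) m := by
            refine Finset.sum_congr rfl fun m hm => ?_
            have hmb : m ∈ bdl f := (Finset.mem_filter.mp hm).2
            rw [Set.indicator_of_mem hmb, gg, show m - 1 + 1 = m from by ring,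
              ofReal_max_zero]
        _ ≤ ∑' m : ℤ, (bdl f).indicator (fun m => ENNReal.ofReal (f m - f (m - 1))) m :=
            ENNReal.sum_le_tsum _
        _ = T1 := by
            rw [hT1]
            exact (tsum_subtype (bdl f) fun m => ENNReal.ofReal (f m - f (m - 1))).symm
    have hSRb : ENNReal.ofReal
        (2 * ∑ m ∈ (Finset.Ico (-(N : ℤ)) (N : ℤ)).filter (· ∈ bdr f), max (-(gg f m)) 0)
        ≤ 2 * T2 := by
      rw [ENNReal.ofReal_mul (by norm_num : (0:ℝ) ≤ 2), ENNReal.ofReal_ofNat]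
      refine mul_le_mul_right ?_ 2
      rw [ENNReal.ofReal_sum_of_nonneg fun m _ => le_max_right _ _]
      calc ∑ m ∈ (Finset.Ico (-(N : ℤ)) (N : ℤ)).filter (· ∈ bdr f),
            ENNReal.ofReal (max (-(gg f m)) 0)
          = ∑ m ∈ (Finset.Ico (-(N : ℤ)) (N : ℤ)).filter (· ∈ bdr f),
            (bdr f).indicator (fun m => ENNReal.ofReal (f m - f (m + 1))) m := by
            refine Finset.sum_congr rfl fun m hm => ?_
            have hmb : m ∈ bdr f := (Finset.mem_filter.mp hm).2
            rw [Set.indicator_of_mem hmb, gg,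
              show -(f (m + 1) - f m) = f m - f (m + 1) from by ring, ofReal_max_zero]
        _ ≤ ∑' m : ℤ, (bdr f).indicator (fun m => ENNReal.ofReal (f m - f (m + 1))) m :=
            ENNReal.sum_le_tsum _
        _ = T2 := by
            rw [hT2]
            exact (tsum_subtype (bdr f) fun m => ENNReal.ofReal (f m - f (m + 1))).symm
    calc P N = ENNReal.ofReal
          (∑ m ∈ Finset.Icc (-(N : ℤ)) (N : ℤ), |gg f m - gg f (m - 1)|) := hofsum
      _ ≤ ENNReal.ofReal (|gg f (N : ℤ)| + |gg f (-(N : ℤ) - 1)|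
            + 2 * ∑ m ∈ (Finset.Icc (-(N : ℤ)) (N : ℤ)).filter (· ∈ bdl f), max (gg f (m - 1)) 0
            + 2 * ∑ m ∈ (Finset.Ico (-(N : ℤ)) (N : ℤ)).filter (· ∈ bdr f), max (-(gg f m)) 0) :=
          ENNReal.ofReal_le_ofReal hw
      _ ≤ ENNReal.ofReal |gg f (N : ℤ)| + ENNReal.ofReal |gg f (-(N : ℤ) - 1)|
            + ENNReal.ofReal (2 * ∑ m ∈ (Finset.Icc (-(N : ℤ)) (N : ℤ)).filter (· ∈ bdl f),
                max (gg f (m - 1)) 0)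
            + ENNReal.ofReal (2 * ∑ m ∈ (Finset.Ico (-(N : ℤ)) (N : ℤ)).filter (· ∈ bdr f),
                max (-(gg f m)) 0) := hsplit4 _ _ _ _
      _ ≤ a N + b N + (2 * T1 + 2 * T2) := by
          rw [haN, hbN, add_assoc (a N + b N)]
          exact add_le_add (add_le_add le_rfl le_rfl) (add_le_add hSLb hSRb)
  -- Step C : conclude via the iInf-iSup characterization of limsup
  refine hsup.trans ?_
  have hPmono : Monotone P := by
    intro i j hij
    simp only [hP]
    apply Finset.sum_le_sum_of_subset
    apply Finset.Icc_subset_Icc <;> omega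
  have key2 : ∀ N₀ M : ℕ, P N₀ ≤ (⨆ n, ⨆ _ : n ≥ M, a n) + (⨆ n, ⨆ _ : n ≥ M, b n)
      + (2 * T1 + 2 * T2) := by
    intro N₀ M
    refine (hPmono (le_max_left N₀ M)).trans ((hPb _).trans ?_)
    refine add_le_add (add_le_add ?_ ?_) le_rfl
    · exact le_iSup₂ (f := fun n _ => a n) (max N₀ M) (le_max_right _ _)
    · exact le_iSup₂ (f := fun n _ => b n) (max N₀ M) (le_max_right _ _)
  rw [Filter.limsup_eq_iInf_iSup_of_nat, Filter.limsup_eq_iInf_iSup_of_nat, add_assoc]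
  have hinf : (⨅ M : ℕ, ⨆ n, ⨆ _ : n ≥ M, a n) + (⨅ M : ℕ, ⨆ n, ⨆ _ : n ≥ M, b n)
      = ⨅ M : ℕ, ((⨆ n, ⨆ _ : n ≥ M, a n) + (⨆ n, ⨆ _ : n ≥ M, b n)) := by
    apply ENNReal.iInf_add_iInf
    intro i j
    refine ⟨max i j, add_le_add ?_ ?_⟩
    · exact iSup₂_le fun n hn => le_iSup₂ (f := fun n _ => a n) n ((le_max_left _ _).trans hn)
    · exact iSup₂_le fun n hn => le_iSup₂ (f := fun n _ => b n) n ((le_max_right _ _).trans hn)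
  rw [hinf, ENNReal.iInf_add]
  exact iSup_le fun N₀ => le_iInf fun M => key2 N₀ M
end

section
/- Let A ⊆ ℤ with A ≠ ∅ and Aᶜ ≠ ∅. Then ‖χ_A''‖₁ ≥ 2, i.e. Σ_{n∈ℤ} |χ_A(n+2) − 2χ_A(n+1) + χ_A(n)| ≥ 2, the sum being interpreted in the extended nonnegative reals. -/
open Classical

lemma exists_transition (A : Set ℤ) (hA : A.Nonempty) (hAc : Aᶜ.Nonempty) :
    ∃ m : ℤ, ¬(m ∈ A ↔ m + 1 ∈ A) := by
  by_contra h
  push_neg at h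
  obtain ⟨a, ha⟩ := hA
  obtain ⟨b, hb⟩ := hAc
  have key : ∀ n : ℤ, n ∈ A ↔ 0 ∈ A := by
    intro n
    induction n using Int.induction_on with
    | zero => rfl
    | succ k ih => rw [← h k]; exact ih
    | pred k ih =>
      have := h (-(k : ℤ) - 1)
      rw [show (-(k:ℤ) - 1 + 1) = -k by ring] at this
      exact this.trans ih
  exact hb ((key b).mpr ((key a).mp ha))

theorem second_derivative_char_ge_two (A : Set ℤ) (hA : A.Nonempty) (hAc : Aᶜ.Nonempty) :
    2 ≤ ∑' n : ℤ, ENNReal.ofReal |chi A (n + 2) - 2 * chi A (n + 1) + chi A n| := by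
  obtain ⟨m, hm⟩ := exists_transition A hA hAc
  have key : ∀ n : ℤ, ¬(n ∈ A ↔ n + 1 ∈ A) →
      (1 : ENNReal) ≤ ENNReal.ofReal |chi A (n + 2) - 2 * chi A (n + 1) + chi A n| ∧
      (1 : ENNReal) ≤ ENNReal.ofReal |chi A (n - 1 + 2) - 2 * chi A (n - 1 + 1) + chi A (n - 1)| := by
    intro n hn
    rw [show n - 1 + 2 = n + 1 by ring, show n - 1 + 1 = n by ring]
    unfold chi
    constructor <;>
    · rw [show (1 : ENNReal) = ENNReal.ofReal 1 by simp]
      apply ENNReal.ofReal_le_ofReal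
      split_ifs <;> simp_all <;> norm_num
  obtain ⟨h1, h2⟩ := key m hm
  have hsum : ∑ n ∈ ({m - 1, m} : Finset ℤ),
      ENNReal.ofReal |chi A (n + 2) - 2 * chi A (n + 1) + chi A n| ≤
      ∑' n : ℤ, ENNReal.ofReal |chi A (n + 2) - 2 * chi A (n + 1) + chi A n| :=
    ENNReal.sum_le_tsum _
  rw [Finset.sum_pair (by omega : m - 1 ≠ m)] at hsum
  calc (2 : ENNReal) = 1 + 1 := by norm_num
    _ ≤ _ + _ := add_le_add h2 h1
    _ ≤ _ := hsum
end
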